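/- There exists a constant N* ∈ (0,1) with the following property. Let φ : ℝ² → ℝ be twice continuously differentiable and satisfy φ(0,0) = 0, ∇φ(0,0) = 0, and sup over |y'| ≤ 2 of (|φ(y')| + |∇φ(y')| + ‖D²φ(y')‖) ≤ N*. Then for every r ∈ (0, 1/4], the set O(φ,r) := ((−1,1)³ \ E(r)) ∩ { x ∈ ℝ³ : x₃ > φ(x₁,x₂) } is star-shaped with respect to the ball B((0,0,3/4), 1/16); that is, every point a of the open Euclidean ball B((0,0,3/4), 1/16) belongs to O(φ,r), and for every a ∈ B((0,0,3/4), 1/16) and every b ∈ O(φ,r) the closed line segment joining a to b is contained in O(φ,r). -/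

import Mathlib

open Set Metric

noncomputable section

/-- Points of `ℝ³` with the Euclidean norm. -/
abbrev E3 := EuclideanSpace ℝ (Fin 3)

/-- Points of `ℝ²` with the Euclidean norm. -/
abbrev E2 := EuclideanSpace ℝ (Fin 2)

/-- Projection onto the first two coordinates, `x ↦ x' = (x₁, x₂)`. -/
def proj2 (x : E3) : E2 := WithLp.toLp 2 (fun i : Fin 2 => x i.castSucc : Fin 2 → ℝ)

/-- The open cone `E(r) = { x : |x₃ − r|² > |x'|² and x₃ < r }` of angle `π/2`
with vertex `r e₃` pointing in the `e₃` direction. -/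
def coneE (r : ℝ) : Set E3 :=
  {x | (x 2 - r) ^ 2 > (x 0) ^ 2 + (x 1) ^ 2 ∧ x 2 < r}

/-- The open cube `(−1,1)³`. -/
def unitCube : Set E3 := {x | |x 0| < 1 ∧ |x 1| < 1 ∧ |x 2| < 1}

/-- The truncation domain `O(φ,r) = ((−1,1)³ \ E(r)) ∩ { x₃ > φ(x') }`. -/
def Odom (φ : E2 → ℝ) (r : ℝ) : Set E3 :=
  (unitCube \ coneE r) ∩ {x | x 2 > φ (proj2 x)}

/-- The point `(0,0,3/4) ∈ ℝ³`. -/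
def starCenter : E3 := EuclideanSpace.single 2 (3 / 4 : ℝ)

/-!
Take `N* = 1/16`. Then on the disc `‖y'‖ ≤ 2` the function `φ` is bounded by `1/16` and, by the
mean value theorem, `1/16`-Lipschitz. On the cube, `O(φ,r)` is the intersection of the convex cube,
the complement `{r ≤ ‖x'‖ + x₃}` of the cone, and the strict supergraph of `φ` over the disc, and
star-shapedness with respect to a point survives intersections. The cone complement is
star-shaped with respect to every `a` with `‖a'‖ + r ≤ a₃` (reverse triangle inequality in `x'`),
and the supergraph of a `K`-Lipschitz function with respect to every `a` lying strictly above all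
the cones `φ(y') + K‖a' - y'‖`. Points of the ball, which sits near `(0,0,3/4)`, satisfy both
conditions.
-/

section StarConvex

variable {E F : Type*} [AddCommGroup E] [Module ℝ E] [NormedAddCommGroup F] [NormedSpace ℝ F]

theorem starConvex_setOf_le_norm_add (P : E →ₗ[ℝ] F) (h : E →ₗ[ℝ] ℝ) {r : ℝ} {a : E}
    (ha : ‖P a‖ + r ≤ h a) : StarConvex ℝ a {x | r ≤ ‖P x‖ + h x} := by
  intro b (hb : r ≤ ‖P b‖ + h b) u v hu hv huv
  obtain rfl : v = 1 - u := by linarith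
  show r ≤ ‖P (u • a + (1 - u) • b)‖ + h (u • a + (1 - u) • b)
  rw [map_add, map_smul, map_smul, map_add, map_smul, map_smul, smul_eq_mul, smul_eq_mul]
  have hPx : (1 - u) * ‖P b‖ - u * ‖P a‖ ≤ ‖u • P a + (1 - u) • P b‖ := by
    simpa [norm_smul, abs_of_nonneg hu, abs_of_nonneg hv, add_comm] using
      norm_sub_norm_le ((1 - u) • P b) (-(u • P a))
  nlinarith [mul_le_mul_of_nonneg_left hb hv, mul_le_mul_of_nonneg_left ha hu]

theorem starConvex_setOf_lt_of_lipschitzOnWith (P : E →ₗ[ℝ] F) (h : E →ₗ[ℝ] ℝ) {φ : F → ℝ}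
    {K : NNReal} {s : Set F} (hs : Convex ℝ s) (hφ : LipschitzOnWith K φ s) {a : E}
    (has : P a ∈ s) (ha : ∀ y ∈ s, φ y + K * ‖P a - y‖ < h a) :
    StarConvex ℝ a {x | P x ∈ s ∧ φ (P x) < h x} := by
  rintro b ⟨hbs, hb⟩ u v hu hv huv
  show P (u • a + v • b) ∈ s ∧ φ (P (u • a + v • b)) < h (u • a + v • b)
  rw [map_add, map_smul, map_smul, map_add, map_smul, map_smul, smul_eq_mul, smul_eq_mul]
  have hxs : u • P a + v • P b ∈ s := hs has hbs hu hv huv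
  refine ⟨hxs, ?_⟩
  obtain rfl : v = 1 - u := by linarith
  rcases hu.eq_or_lt with rfl | hu
  · simpa using hb
  have hlip : φ (u • P a + (1 - u) • P b) ≤ φ (P b) + K * (u * ‖P a - P b‖) := by
    have := (abs_le.mp (hφ.dist_le_mul _ hxs _ hbs)).2
    rw [dist_eq_norm, show u • P a + (1 - u) • P b - P b = u • (P a - P b) by module,
      norm_smul, Real.norm_of_nonneg hu.le] at this
    linarith
  nlinarith [mul_lt_mul_of_pos_left (ha _ hbs) hu, mul_le_mul_of_nonneg_left hb.le hv]

end StarConvex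

def proj2ₗ : E3 →ₗ[ℝ] E2 where
  toFun := proj2
  map_add' _ _ := rfl
  map_smul' _ _ := rfl

lemma proj2ₗ_apply (x : E3) : proj2ₗ x = proj2 x := rfl

lemma norm_proj2_sq (x : E3) : ‖proj2 x‖ ^ 2 = x 0 ^ 2 + x 1 ^ 2 := by
  simp [EuclideanSpace.real_norm_sq_eq, Fin.sum_univ_two, proj2]

lemma norm_proj2_le (x : E3) : ‖proj2 x‖ ≤ ‖x‖ := by
  refine (pow_le_pow_iff_left₀ (norm_nonneg _) (norm_nonneg _) two_ne_zero).1 ?_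
  rw [norm_proj2_sq, EuclideanSpace.real_norm_sq_eq, Fin.sum_univ_three]
  nlinarith [sq_nonneg (x 2)]

lemma mem_coneE_iff {r : ℝ} {x : E3} : x ∈ coneE r ↔ ‖proj2 x‖ < r - x 2 := by
  have h := norm_proj2_sq x
  have hn := norm_nonneg (proj2 x)
  constructor
  · rintro ⟨h1, h2⟩
    nlinarith
  · intro h1
    exact ⟨by nlinarith, by linarith⟩

lemma convex_unitCube : Convex ℝ unitCube := by
  have h (i : Fin 3) : Convex ℝ {x : E3 | |x i| < 1} := by
    have : {x : E3 | |x i| < 1} = EuclideanSpace.projₗ i ⁻¹' ball 0 1 := by ext; simp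
    exact this ▸ (convex_ball 0 1).linear_preimage _
  simpa [unitCube, ofPred_and] using (h 0).inter ((h 1).inter (h 2))

lemma ball_starCenter_subset_unitCube : ball starCenter (1 / 16) ⊆ unitCube := by
  intro a ha
  have ha' : ‖a‖ < 1 := calc
    ‖a‖ ≤ ‖starCenter‖ + ‖a - starCenter‖ := norm_le_norm_add_norm_sub' a starCenter
    _ < 3 / 4 + 1 / 16 := by
      refine add_lt_add_of_le_of_lt (le_of_eq ?_) (mem_ball_iff_norm.1 ha)
      simp [starCenter, PiLp.norm_single]
    _ < 1 := by norm_num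
  exact ⟨(PiLp.norm_apply_le a 0).trans_lt ha', (PiLp.norm_apply_le a 1).trans_lt ha',
    (PiLp.norm_apply_le a 2).trans_lt ha'⟩

lemma odom_eq_inter (φ : E2 → ℝ) (r : ℝ) :
    Odom φ r = unitCube ∩ ({x | r ≤ ‖proj2ₗ x‖ + EuclideanSpace.projₗ 2 x} ∩
      {x | proj2ₗ x ∈ closedBall 0 2 ∧ φ (proj2ₗ x) < EuclideanSpace.projₗ 2 x}) := by
  ext x
  simp only [Odom, mem_inter_iff, mem_sdiff, mem_coneE_iff, not_lt, sub_le_iff_le_add,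
    mem_ofPred_eq, mem_closedBall_zero_iff, proj2ₗ_apply]
  have hcube : x ∈ unitCube → ‖proj2 x‖ ≤ 2 := fun ⟨h0, h1, _⟩ => by
    nlinarith [norm_proj2_sq x, norm_nonneg (proj2 x), sq_abs (x 0), sq_abs (x 1),
      abs_nonneg (x 0), abs_nonneg (x 1)]
  exact ⟨fun ⟨⟨hc, hnc⟩, hg⟩ => ⟨hc, hnc, hcube hc, hg⟩,
    fun ⟨hc, hnc, _, hg⟩ => ⟨⟨hc, hnc⟩, hg⟩⟩

lemma mem_ball_starCenter_bounds {a : E3} (ha : a ∈ ball starCenter (1 / 16)) :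
    ‖proj2 a‖ < 1 / 16 ∧ 11 / 16 < a 2 := by
  rw [mem_ball_iff_norm] at ha
  have hc : proj2 starCenter = 0 := by
    ext i; fin_cases i <;> simp [proj2, starCenter]
  constructor
  · calc ‖proj2 a‖ = ‖proj2 (a - starCenter)‖ := by
          symm
          rw [← proj2ₗ_apply, map_sub, proj2ₗ_apply, proj2ₗ_apply, hc, sub_zero]
      _ ≤ ‖a - starCenter‖ := norm_proj2_le _
      _ < 1 / 16 := ha
  · have := (abs_lt.1 ((PiLp.norm_apply_le (a - starCenter) 2).trans_lt ha)).1
    simp only [PiLp.sub_apply, starCenter, PiLp.single_apply, if_true] at this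
    linarith

lemma mem_and_starConvex_odom {φ : E2 → ℝ} (hφ_le : ∀ y ∈ closedBall (0 : E2) 2, φ y ≤ 1 / 16)
    (hφ_lip : LipschitzOnWith (1 / 16) φ (closedBall 0 2)) {r : ℝ} (hr : r ≤ 1 / 4) {a : E3}
    (ha : a ∈ ball starCenter (1 / 16)) : a ∈ Odom φ r ∧ StarConvex ℝ a (Odom φ r) := by
  obtain ⟨ha', ha₂⟩ := mem_ball_starCenter_bounds ha
  have ha_cube := ball_starCenter_subset_unitCube ha
  have ha_cone : ‖proj2ₗ a‖ + r ≤ EuclideanSpace.projₗ 2 a := by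
    change ‖proj2 a‖ + r ≤ a 2
    linarith
  have ha_ball : proj2ₗ a ∈ closedBall 0 2 := by
    rw [mem_closedBall_zero_iff, proj2ₗ_apply]
    linarith
  have ha_graph (y : E2) (hy : y ∈ closedBall 0 2) :
      φ y + (1 / 16 : NNReal) * ‖proj2ₗ a - y‖ < EuclideanSpace.projₗ 2 a := by
    have hdist : ‖proj2 a - y‖ ≤ 1 / 16 + 2 :=
      (norm_sub_le _ _).trans (by linarith [mem_closedBall_zero_iff.1 hy])
    change φ y + ((1 / 16 : NNReal) : ℝ) * ‖proj2 a - y‖ < a 2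
    push_cast
    linarith [hφ_le y hy]
  rw [odom_eq_inter]
  refine ⟨⟨ha_cube, show r ≤ _ by linarith [norm_nonneg (proj2ₗ a)], ha_ball,
    by simpa using ha_graph _ ha_ball⟩, ?_⟩
  exact (convex_unitCube.starConvex ha_cube).inter
    ((starConvex_setOf_le_norm_add _ _ ha_cone).inter
      (starConvex_setOf_lt_of_lipschitzOnWith _ _ (convex_closedBall 0 2) hφ_lip ha_ball
        ha_graph))

/-- **Lemma 2.3 (A star-shaped domain).**  There exists `0 < N* < 1` such that whenever
`φ : ℝ² → ℝ` is `C²` with `φ(0) = 0`, `∇φ(0) = 0` and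
`|φ| + |∇φ| + ‖D²φ‖ ≤ N*` on `{|y'| ≤ 2}`, then for every `0 < r ≤ 1/4` the domain
`O(φ,r)` is star-shaped with respect to the ball `B((0,0,3/4), 1/16)`. -/
theorem star_shaped_domain :
    ∃ Nstar : ℝ, 0 < Nstar ∧ Nstar < 1 ∧
      ∀ φ : E2 → ℝ, ContDiff ℝ 2 φ → φ 0 = 0 → fderiv ℝ φ 0 = 0 →
        (∀ y' : E2, ‖y'‖ ≤ 2 →
          |φ y'| + ‖fderiv ℝ φ y'‖ + ‖iteratedFDeriv ℝ 2 φ y'‖ ≤ Nstar) →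
        ∀ r : ℝ, 0 < r → r ≤ 1 / 4 →
          ball starCenter (1 / 16) ⊆ Odom φ r ∧
          ∀ a ∈ ball starCenter (1 / 16), ∀ b ∈ Odom φ r,
            segment ℝ a b ⊆ Odom φ r := by
  refine ⟨1 / 16, by norm_num, by norm_num, fun φ hφ _ _ hbound r _ hr => ?_⟩
  have hφ_le (y : E2) (hy : y ∈ closedBall 0 2) : φ y ≤ 1 / 16 := by
    have := hbound y (mem_closedBall_zero_iff.1 hy)
    linarith [le_abs_self (φ y), norm_nonneg (fderiv ℝ φ y),
      norm_nonneg (iteratedFDeriv ℝ 2 φ y)]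
  have hφ_lip : LipschitzOnWith (1 / 16) φ (closedBall 0 2) := by
    refine (convex_closedBall 0 2).lipschitzOnWith_of_nnnorm_fderiv_le
      (fun y _ => (hφ.differentiable (by norm_num)).differentiableAt) fun y hy => ?_
    have := hbound y (mem_closedBall_zero_iff.1 hy)
    rw [← NNReal.coe_le_coe, coe_nnnorm]
    push_cast
    linarith [abs_nonneg (φ y), norm_nonneg (iteratedFDeriv ℝ 2 φ y)]
  have hstar := fun a (ha : a ∈ ball starCenter (1 / 16)) =>
    mem_and_starConvex_odom hφ_le hφ_lip hr ha
  exact ⟨fun a ha => (hstar a ha).1, fun a ha b hb => (hstar a ha).2.segment_subset hb⟩
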